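/- arXiv:2209.12648 — 2 statements merged into one kernel-verified Lean document; each statement's English description precedes it below -/
import Mathlib

section
/- Let x : [0, ∞) → ℝ² be a continuous curve with x(t) ∈ Cone(a, g, r) for all t ≥ 0 (where a = x(0), 0 < r < ‖g − a‖), such that ‖x(t) − g‖ is nonincreasing and x(t) → g as t → ∞. Then x(t) ∈ IC(a, g, r) = conv({a} ∪ B(g, r)) for all t ≥ 0. -/
open Real Metric Set
open scoped RealInnerProductSpace

noncomputable section

abbrev E2 := EuclideanSpace ℝ (Fin 2)

/-- Unit forward direction vector of orientation `θ`. -/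
def uvec (θ : ℝ) : E2 := !₂[Real.cos θ, Real.sin θ]

/-- Unit normal (perpendicular) vector of orientation `θ`. -/
def nvec (θ : ℝ) : E2 := !₂[-Real.sin θ, Real.cos θ]

/-- Two-argument arctangent, `atan2 y x`. -/
def atan2 (y x : ℝ) : ℝ := Complex.arg (x + y * Complex.I)

/-- The (unbounded) cone with apex `a`, base point `b`, and base radius `r`. -/
def cone (a b : E2) (r : ℝ) : Set E2 :=
  {p | ∃ α : ℝ, 0 ≤ α ∧ ∃ z ∈ closedBall b r, p = a + α • (z - a)}

/-- The half-plane bounded at `a` pointing towards `b`. -/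
def hplane (a b : E2) : Set E2 := {z | 0 ≤ ⟪b - a, z - a⟫}

/-- The bounded ice-cream cone with apex `a`, base point `b`, and radius `r`. -/
def icone (a b : E2) (r : ℝ) : Set E2 := convexHull ℝ ({a} ∪ closedBall b r)


/-!
Put `ψ p = ⟪g - a, p - a⟫` and `c = ‖g - a‖² - r²`. On the cone, `‖p - a‖² c ≤ ψ p ²`, and with
`β = ψ p / c` this gives `‖(p - a) - β (g - a)‖ ≤ β r`: the point `p` lies on a segment from `a` to
`B(g, r)` when `β ≤ 1`, and in `B(g, r)` itself when `β = 1`. Along the trajectory `ψ` starts at `0`,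
so if it ever exceeds `c` it first takes the value `c`, at a time when `x` is within `r` of `g`;
since `‖x - g‖` does not increase, `x` stays in `B(g, r)` from then on.
-/

section InnerProductSpace

open scoped Pointwise

variable {F : Type*} [NormedAddCommGroup F] [InnerProductSpace ℝ F]

theorem inner_nonneg_and_sq_norm_mul_le_of_norm_sub_le {v w : F} {r : ℝ} (hr : r ≤ ‖v‖)
    (hw : ‖w - v‖ ≤ r) :
    0 ≤ ⟪v, w⟫ ∧ ‖w‖ ^ 2 * (‖v‖ ^ 2 - r ^ 2) ≤ ⟪v, w⟫ ^ 2 := by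
  set I := ⟪v, w - v⟫
  have hinner : ⟪v, w⟫ = I + ‖v‖ ^ 2 := by
    rw [← real_inner_self_eq_norm_sq, ← inner_add_right, sub_add_cancel]
  have hnorm : ‖w‖ ^ 2 = ‖w - v‖ ^ 2 + 2 * I + ‖v‖ ^ 2 := by
    conv_lhs => rw [← sub_add_cancel w v]
    rw [norm_add_sq_real, real_inner_comm]
  have hI : -(‖v‖ * r) ≤ I :=
    (neg_le_neg (mul_le_mul_of_nonneg_left hw (norm_nonneg v))).trans
      (neg_le_of_abs_le (abs_real_inner_le_norm _ _))
  have hr0 : 0 ≤ r := (norm_nonneg _).trans hw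
  have hsq : ‖w - v‖ ^ 2 ≤ r ^ 2 := pow_le_pow_left₀ (norm_nonneg _) hw 2
  refine ⟨by rw [hinner]; nlinarith, ?_⟩
  rw [hinner, hnorm]
  -- the gap is `(I + r²)² + (r² - ‖w - v‖²)(‖v‖² - r²)`
  nlinarith [sq_nonneg (I + r ^ 2), mul_nonneg (sub_nonneg.2 hsq)
    (sub_nonneg.2 (pow_le_pow_left₀ hr0 hr 2))]

theorem norm_sub_smul_le_of_sq_norm_mul_le {u v : F} {r β : ℝ} (hc : 0 < ‖v‖ ^ 2 - r ^ 2)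
    (hr : 0 ≤ r) (hβ0 : 0 ≤ β) (hu : ‖u‖ ^ 2 * (‖v‖ ^ 2 - r ^ 2) ≤ ⟪v, u⟫ ^ 2)
    (hβ : ⟪v, u⟫ = β * (‖v‖ ^ 2 - r ^ 2)) :
    ‖u - β • v‖ ≤ β * r := by
  have hu' : ‖u‖ ^ 2 ≤ β ^ 2 * (‖v‖ ^ 2 - r ^ 2) := by
    rw [hβ] at hu
    nlinarith
  have hsq : ‖u - β • v‖ ^ 2 ≤ (β * r) ^ 2 := by
    rw [norm_sub_sq_real, real_inner_smul_right, norm_smul, Real.norm_eq_abs, mul_pow, sq_abs,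
      real_inner_comm, hβ]
    nlinarith
  exact (pow_le_pow_iff_left₀ (norm_nonneg _) (mul_nonneg hβ0 hr) two_ne_zero).1 hsq

theorem mem_convexHull_of_norm_sub_smul_le {a g p : F} {r β : ℝ} (hr : 0 ≤ r) (hβ0 : 0 ≤ β)
    (hβ1 : β ≤ 1) (hp : ‖(p - a) - β • (g - a)‖ ≤ β * r) :
    p ∈ convexHull ℝ ({a} ∪ closedBall g r) := by
  have hpa : p - a ∈ β • closedBall (g - a) r := by
    rwa [smul_closedBall _ _ hr, mem_closedBall_iff_norm, Real.norm_eq_abs, abs_of_nonneg hβ0]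
  obtain ⟨z, hz, hzp : β • z = p - a⟩ := hpa
  have hq : a + z ∈ closedBall g r := by
    rwa [mem_closedBall_iff_norm, show a + z - g = z - (g - a) by abel, ← mem_closedBall_iff_norm]
  have hseg : p ∈ segment ℝ a (a + z) := by
    refine ⟨1 - β, β, by linarith, hβ0, by ring, ?_⟩
    rw [smul_add, hzp, sub_smul, one_smul]
    abel
  exact segment_subset_convexHull (mem_union_left _ (mem_singleton a)) (mem_union_right _ hq) hseg

end InnerProductSpace

theorem inner_nonneg_and_sq_norm_mul_le_of_mem_cone {a g p : E2} {r : ℝ} (hr : r ≤ ‖g - a‖)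
    (hp : p ∈ cone a g r) :
    0 ≤ ⟪g - a, p - a⟫ ∧ ‖p - a‖ ^ 2 * (‖g - a‖ ^ 2 - r ^ 2) ≤ ⟪g - a, p - a⟫ ^ 2 := by
  obtain ⟨α, hα, z, hz, rfl⟩ := hp
  rw [mem_closedBall_iff_norm, ← sub_sub_sub_cancel_right z g a] at hz
  obtain ⟨hpos, hle⟩ := inner_nonneg_and_sq_norm_mul_le_of_norm_sub_le hr hz
  rw [add_sub_cancel_left, real_inner_smul_right, norm_smul, Real.norm_eq_abs, mul_pow, sq_abs,
    mul_pow, mul_assoc]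
  exact ⟨mul_nonneg hα hpos, mul_le_mul_of_nonneg_left hle (sq_nonneg α)⟩

theorem mem_icone_of_mem_cone_of_inner_le {a g p : E2} {r : ℝ} (hr0 : 0 ≤ r) (hr : r < ‖g - a‖)
    (hp : p ∈ cone a g r) (hle : ⟪g - a, p - a⟫ ≤ ‖g - a‖ ^ 2 - r ^ 2) :
    p ∈ icone a g r := by
  have hc : 0 < ‖g - a‖ ^ 2 - r ^ 2 := sub_pos.2 (pow_lt_pow_left₀ hr hr0 two_ne_zero)
  obtain ⟨hpos, hsq⟩ := inner_nonneg_and_sq_norm_mul_le_of_mem_cone hr.le hp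
  have hβ0 := div_nonneg hpos hc.le
  exact mem_convexHull_of_norm_sub_smul_le hr0 hβ0 ((div_le_one hc).2 hle)
    (norm_sub_smul_le_of_sq_norm_mul_le hc hr0 hβ0 hsq (div_mul_cancel₀ _ hc.ne').symm)

theorem norm_sub_le_of_mem_cone_of_inner_eq {a g p : E2} {r : ℝ} (hr0 : 0 ≤ r)
    (hr : r < ‖g - a‖) (hp : p ∈ cone a g r) (heq : ⟪g - a, p - a⟫ = ‖g - a‖ ^ 2 - r ^ 2) :
    ‖p - g‖ ≤ r := by
  have hc : 0 < ‖g - a‖ ^ 2 - r ^ 2 := sub_pos.2 (pow_lt_pow_left₀ hr hr0 two_ne_zero)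
  have h := norm_sub_smul_le_of_sq_norm_mul_le hc hr0 zero_le_one
    (inner_nonneg_and_sq_norm_mul_le_of_mem_cone hr.le hp).2 (heq.trans (one_mul _).symm)
  rwa [one_smul, one_mul, sub_sub_sub_cancel_right] at h

theorem stmt_13_general (a g : E2) (r : ℝ) (h0 : 0 < r) (h1 : r < ‖g - a‖)
    (x : ℝ → E2) (hx0 : x 0 = a)
    (hcont : ContinuousOn x (Set.Ici 0))
    (hcone : ∀ t, 0 ≤ t → x t ∈ cone a g r)
    (hmono : AntitoneOn (fun t => ‖x t - g‖) (Set.Ici 0)) :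
    ∀ t, 0 ≤ t → x t ∈ icone a g r := by
  intro t ht
  set ψ : ℝ → ℝ := fun s => ⟪g - a, x s - a⟫
  rcases le_or_gt (ψ t) (‖g - a‖ ^ 2 - r ^ 2) with hle | hlt
  · exact mem_icone_of_mem_cone_of_inner_le h0.le h1 (hcone t ht) hle
  have hψ : ContinuousOn ψ (Icc 0 t) :=
    (continuous_const.inner (continuous_id.sub continuous_const)).comp_continuousOn
      (hcont.mono Icc_subset_Ici_self)
  have hψ0 : ψ 0 ≤ ‖g - a‖ ^ 2 - r ^ 2 := by
    simpa [ψ, hx0] using (pow_le_pow_left₀ h0.le h1.le 2)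
  obtain ⟨τ, ⟨hτ0, hτt⟩, hτ⟩ := intermediate_value_Icc ht hψ ⟨hψ0, hlt.le⟩
  have hτg : ‖x τ - g‖ ≤ r := norm_sub_le_of_mem_cone_of_inner_eq h0.le h1 (hcone τ hτ0) hτ
  have htg : ‖x t - g‖ ≤ r := (hmono hτ0 ht hτt).trans hτg
  exact subset_convexHull ℝ _ (Or.inr (mem_closedBall_iff_norm.2 htg))

/-- A continuous curve that starts at the apex, stays in the cone, has
nonincreasing distance to the goal, and converges to the goal remains inside
the bounded ice-cream cone. -/
theorem stmt_13 (a g : E2) (r : ℝ) (h0 : 0 < r) (h1 : r < ‖g - a‖)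
    (x : ℝ → E2) (hx0 : x 0 = a)
    (hcont : ContinuousOn x (Set.Ici 0))
    (hcone : ∀ t, 0 ≤ t → x t ∈ cone a g r)
    (hmono : AntitoneOn (fun t => ‖x t - g‖) (Set.Ici 0))
    (hlim : Filter.Tendsto x Filter.atTop (nhds g)) :
    ∀ t, 0 ≤ t → x t ∈ icone a g r :=
  stmt_13_general a g r h0 h1 x hx0 hcont hcone hmono
end
end

section
/- For apex a, base b ∈ ℝ² with r := d ≤ ‖b − a‖ and unit vector u = (cos θ, sin θ) satisfying u·(b − a) = c ≥ 0 and |(−sin θ, cos θ)·(b − a)| = d, the truncated ice-cream cone TC(a, b, θ) := conv{a, b, a + c·u} ∪ B(b, d) is contained in the ice-cream cone IC(a, b, d) = conv({a} ∪ B(b, d)). -/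
open Real Metric Set
open scoped RealInnerProductSpace

noncomputable section

/-- The truncated ice-cream cone is contained in the ice-cream cone. -/
theorem stmt_19 (a b : E2) (θ : ℝ)
    (c : ℝ) (hc : c = ⟪uvec θ, b - a⟫) (hc0 : 0 ≤ c)
    (d : ℝ) (hd : d = |⟪nvec θ, b - a⟫|) (hdle : d ≤ ‖b - a‖) :
    convexHull ℝ {a, b, a + c • uvec θ} ∪ closedBall b d ⊆ icone a b d := by
  have hd0 : 0 ≤ d := hd ▸ abs_nonneg _
  have hfoot : a + c • uvec θ ∈ closedBall b d := by
    rw [mem_closedBall, dist_eq_norm]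
    have : ‖a + c • uvec θ - b‖ ^ 2 = d ^ 2 := by
      have hv : c = cos θ * (b - a) 0 + sin θ * (b - a) 1 := by
        rw [hc]
        simp [uvec, PiLp.inner_apply, Fin.sum_univ_two, mul_comm]
      have hw : d ^ 2 = (-sin θ * (b - a) 0 + cos θ * (b - a) 1) ^ 2 := by
        rw [hd, sq_abs]
        simp [nvec, PiLp.inner_apply, Fin.sum_univ_two, mul_comm]
      have hpyth : sin θ ^ 2 + cos θ ^ 2 = 1 := sin_sq_add_cos_sq θ
      rw [EuclideanSpace.norm_eq]
      rw [Real.sq_sqrt (by positivity)]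
      have e0 : (a + c • uvec θ - b) 0 = a 0 + c * cos θ - b 0 := by
        simp [uvec]
      have e1 : (a + c • uvec θ - b) 1 = a 1 + c * sin θ - b 1 := by
        simp [uvec]
      have f0 : (b - a) 0 = b 0 - a 0 := by simp
      have f1 : (b - a) 1 = b 1 - a 1 := by simp
      rw [Fin.sum_univ_two, e0, e1]
      simp only [Real.norm_eq_abs, sq_abs]
      rw [f0, f1] at hv hw
      subst hv
      rw [hw]
      linear_combination ((cos θ * (b 0 - a 0) + sin θ * (b 1 - a 1)) ^ 2 -
        (b 0 - a 0) ^ 2 - (b 1 - a 1) ^ 2) * hpyth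
    nlinarith [norm_nonneg (a + c • uvec θ - b), this, hd0]
  apply union_subset
  · apply convexHull_min _ (convex_convexHull ℝ _)
    intro p hp
    rcases hp with rfl | rfl | rfl
    · exact subset_convexHull ℝ _ (Or.inl rfl)
    · exact subset_convexHull ℝ _ (Or.inr (mem_closedBall_self hd0))
    · exact subset_convexHull ℝ _ (Or.inr hfoot)
  · exact fun x hx => subset_convexHull ℝ _ (Or.inr hx)
end
end
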